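/- Let A be a crystalline graded ring with group G, subring R, homogeneous elements u : G → A, maps σ_g (u_g r = σ_g(r) u_g) and α : G × G → R (u_g u_h = α(g,h) u_{gh}), and set H = {h ∈ G | α(h,h⁻¹) is invertible in R}. Then for all h, h′ ∈ H and all x, y ∈ G, the left ideals R·α(hx, yh′) and R·σ_h(α(x,y)) of R coincide; in particular, if α(x,y) is invertible in R then so is α(hx, yh′) for every h, h′ ∈ H. -/
import Mathlib


/-- A pre-crystalline graded ring: an associative unital ring `A` with a group `G`,
an injective map `u : G → A` with `u 1 = 1` and `u g ≠ 0`, and a subring `R ⊆ A`, such that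
(C1) `A = ⊕_{g ∈ G} R·u g` (internal direct sum of additive subgroups),
(C2) `R·u g = u g·R` and `R·u g` is free of rank one as a left `R`-module with basis `u g`,
(C3) the decomposition makes `A` a `G`-graded ring, i.e. `(R u_g)(R u_h) ⊆ R u_{gh}`. -/
structure PreCrystalline (A : Type*) [Ring A] {G : Type*} [Group G] [DecidableEq G]
    (R : Subring A) (u : G → A) : Prop where
  u_inj : Function.Injective u
  u_one : u 1 = 1
  u_ne : ∀ g : G, u g ≠ 0
  /-- (C1): the additive subgroups `R·u g` form an internal direct sum decomposition of `A`. -/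
  direct : DirectSum.IsInternal
    (fun g : G => (R.toAddSubgroup.map (AddMonoidHom.mulRight (u g)) : AddSubgroup A))
  /-- (C2), first half: `R·u g = u g·R` for all `g`. -/
  comm : ∀ g : G, {a : A | ∃ r ∈ R, a = r * u g} = {a : A | ∃ r ∈ R, a = u g * r}
  /-- (C2), second half: `R·u g` is free as a left `R`-module with basis `u g`. -/
  free : ∀ g : G, ∀ r ∈ R, r * u g = 0 → r = 0
  /-- (C3): `(R u_g)(R u_h) ⊆ R u_{gh}`. -/
  graded : ∀ g h : G, ∀ r ∈ R, ∀ s ∈ R, ∃ t ∈ R, (r * u g) * (s * u h) = t * u (g * h)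

section Aux

variable {A : Type*} [Ring A] {G : Type*} [Group G] [DecidableEq G]
  {R : Subring A} {u : G → A} {σ : G → R → R} {α : G → G → R}

lemma CGR.cancel (hA : PreCrystalline A R u) (g : G) {r s : R}
    (h : (r : A) * u g = (s : A) * u g) : r = s := by
  have h0 : ((r : A) - s) * u g = 0 := by rw [sub_mul, h, sub_self]
  have h1 := hA.free g _ (sub_mem r.2 s.2) h0
  exact Subtype.ext (sub_eq_zero.mp h1)

lemma CGR.sig_mul (hA : PreCrystalline A R u)
    (hσ : ∀ (g : G) (r : R), u g * (r : A) = (σ g r : A) * u g)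
    (g : G) (r s : R) : σ g (r * s) = σ g r * σ g s := by
  apply CGR.cancel hA g
  have h1 : (↑(σ g (r * s)) : A) * u g = u g * ↑(r * s) := (hσ g (r * s)).symm
  have h2 : (u g : A) * ↑(r * s) = ↑(σ g r) * ↑(σ g s) * u g := by
    have hc : ((r * s : R) : A) = (r : A) * s := rfl
    rw [hc, ← mul_assoc, hσ g r, mul_assoc, hσ g s, ← mul_assoc]
  rw [h1, h2]
  norm_cast

lemma CGR.sig_one (hA : PreCrystalline A R u)
    (hσ : ∀ (g : G) (r : R), u g * (r : A) = (σ g r : A) * u g)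
    (g : G) : σ g 1 = 1 := by
  apply CGR.cancel hA g
  rw [← hσ g 1]
  simp

lemma CGR.sig_unit (hA : PreCrystalline A R u)
    (hσ : ∀ (g : G) (r : R), u g * (r : A) = (σ g r : A) * u g)
    (g : G) {r : R} (hr : IsUnit r) : IsUnit (σ g r) := by
  obtain ⟨v, rfl⟩ := hr
  refine ⟨⟨σ g v, σ g ↑v⁻¹, ?_, ?_⟩, rfl⟩
  · rw [← CGR.sig_mul hA hσ, Units.mul_inv, CGR.sig_one hA hσ]
  · rw [← CGR.sig_mul hA hσ, Units.inv_mul, CGR.sig_one hA hσ]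

lemma CGR.cocycle (hA : PreCrystalline A R u)
    (hσ : ∀ (g : G) (r : R), u g * (r : A) = (σ g r : A) * u g)
    (hα : ∀ g h : G, u g * u h = (α g h : A) * u (g * h))
    (a b c : G) : α a b * α (a * b) c = σ a (α b c) * α a (b * c) := by
  apply CGR.cancel hA (a * b * c)
  have hL : (↑(α a b * α (a * b) c) : A) * u (a * b * c) = u a * u b * u c := by
    push_cast
    rw [mul_assoc, ← hα (a * b) c, ← mul_assoc, ← hα a b]
  have hR : (↑(σ a (α b c) * α a (b * c)) : A) * u (a * b * c) = u a * u b * u c := by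
    push_cast
    rw [mul_assoc a b c, mul_assoc, ← hα a (b * c), ← mul_assoc, ← hσ a (α b c),
      mul_assoc, ← hα b c, ← mul_assoc]
  rw [hL, hR]

lemma CGR.sig_comm (hA : PreCrystalline A R u)
    (hσ : ∀ (g : G) (r : R), u g * (r : A) = (σ g r : A) * u g)
    (hα : ∀ g h : G, u g * u h = (α g h : A) * u (g * h))
    (a b : G) (r : R) : σ a (σ b r) * α a b = α a b * σ (a * b) r := by
  apply CGR.cancel hA (a * b)
  have hL : (↑(σ a (σ b r) * α a b) : A) * u (a * b) = u a * (u b * r) := by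
    push_cast
    rw [mul_assoc, ← hα a b, ← mul_assoc, ← hσ a (σ b r), mul_assoc, ← hσ b r]
  have hR : (↑(α a b * σ (a * b) r) : A) * u (a * b) = u a * (u b * r) := by
    push_cast
    rw [mul_assoc, ← hσ (a * b) r, ← mul_assoc, ← hα a b, mul_assoc]
  rw [hL, hR]

lemma CGR.sig_inj (hA : PreCrystalline A R u)
    (hσ : ∀ (g : G) (r : R), u g * (r : A) = (σ g r : A) * u g)
    (hα : ∀ g h : G, u g * u h = (α g h : A) * u (g * h))
    (htf : ∀ (g h : G) (r : R), α g h * r = 0 → r = 0)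
    (g : G) {r s : R} (h : σ g r = σ g s) : r = s := by
  have h1 : u g * (r : A) = u g * s := by rw [hσ g r, hσ g s, h]
  have h2 : u g⁻¹ * (u g * ((r : A) - s)) = 0 := by
    rw [mul_sub, h1, sub_self, mul_zero]
  rw [← mul_assoc, hα g⁻¹ g, inv_mul_cancel, hA.u_one, mul_one] at h2
  have h3 : α g⁻¹ g * (r - s) = 0 := by
    apply Subtype.ext
    push_cast
    exact h2
  have h4 := htf g⁻¹ g (r - s) h3
  exact sub_eq_zero.mp h4

lemma CGR.sig_surj (hA : PreCrystalline A R u)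
    (hσ : ∀ (g : G) (r : R), u g * (r : A) = (σ g r : A) * u g)
    (g : G) (s : R) : ∃ r : R, σ g r = s := by
  have hmem : (s : A) * u g ∈ {a : A | ∃ r ∈ R, a = u g * r} := by
    rw [← hA.comm g]
    exact ⟨s, s.2, rfl⟩
  obtain ⟨r, hr, hru⟩ := hmem
  refine ⟨⟨r, hr⟩, ?_⟩
  apply CGR.cancel hA g
  rw [← hσ g ⟨r, hr⟩]
  exact hru.symm

lemma CGR.sig_unit_rev (hA : PreCrystalline A R u)
    (hσ : ∀ (g : G) (r : R), u g * (r : A) = (σ g r : A) * u g)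
    (hα : ∀ g h : G, u g * u h = (α g h : A) * u (g * h))
    (htf : ∀ (g h : G) (r : R), α g h * r = 0 → r = 0)
    (g : G) {r : R} (h : IsUnit (σ g r)) : IsUnit r := by
  obtain ⟨v, hv⟩ := h
  obtain ⟨w, hw⟩ := CGR.sig_surj hA hσ g ↑v⁻¹
  refine ⟨⟨r, w, ?_, ?_⟩, rfl⟩
  · apply CGR.sig_inj hA hσ hα htf g
    rw [CGR.sig_mul hA hσ, hw, ← hv, CGR.sig_one hA hσ]
    exact v.mul_inv
  · apply CGR.sig_inj hA hσ hα htf g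
    rw [CGR.sig_mul hA hσ, hw, ← hv, CGR.sig_one hA hσ]
    exact v.inv_mul

lemma CGR.isUnit_of_left_right {M : Type*} [Monoid M] {a b c : M}
    (h1 : b * a = 1) (h2 : a * c = 1) : IsUnit a := by
  have hbc : b = c := by rw [← one_mul c, ← h1, mul_assoc, h2, mul_one]
  exact ⟨⟨a, c, h2, by rw [← hbc]; exact h1⟩, rfl⟩

lemma CGR.alpha_one_left (hA : PreCrystalline A R u)
    (hα : ∀ g h : G, u g * u h = (α g h : A) * u (g * h))
    (g : G) : α 1 g = 1 := by
  apply CGR.cancel hA g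
  have h1 := hα 1 g
  rw [hA.u_one, one_mul, one_mul] at h1
  rw [← h1]
  simp

lemma CGR.alpha_one_right (hA : PreCrystalline A R u)
    (hα : ∀ g h : G, u g * u h = (α g h : A) * u (g * h))
    (g : G) : α g 1 = 1 := by
  apply CGR.cancel hA g
  have h1 := hα g 1
  rw [hA.u_one, mul_one, mul_one] at h1
  rw [← h1]
  simp

/-- the key identity `σ h (α h⁻¹ (h k)) * α h k = α h h⁻¹`. -/
lemma CGR.key (hA : PreCrystalline A R u)
    (hσ : ∀ (g : G) (r : R), u g * (r : A) = (σ g r : A) * u g)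
    (hα : ∀ g h : G, u g * u h = (α g h : A) * u (g * h))
    (h k : G) : σ h (α h⁻¹ (h * k)) * α h k = α h h⁻¹ := by
  have h1 := CGR.cocycle hA hσ hα h h⁻¹ (h * k)
  rw [mul_inv_cancel, CGR.alpha_one_left hA hα, mul_one, inv_mul_cancel_left] at h1
  exact h1.symm

/-- `σ h (α h⁻¹ h) = α h h⁻¹`. -/
lemma CGR.key2 (hA : PreCrystalline A R u)
    (hσ : ∀ (g : G) (r : R), u g * (r : A) = (σ g r : A) * u g)
    (hα : ∀ g h : G, u g * u h = (α g h : A) * u (g * h))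
    (h : G) : σ h (α h⁻¹ h) = α h h⁻¹ := by
  have h1 := CGR.cocycle hA hσ hα h h⁻¹ h
  rw [mul_inv_cancel, CGR.alpha_one_left hA hα, mul_one, inv_mul_cancel,
    CGR.alpha_one_right hA hα, mul_one] at h1
  exact h1.symm

lemma CGR.alpha_unit_left (hA : PreCrystalline A R u)
    (hσ : ∀ (g : G) (r : R), u g * (r : A) = (σ g r : A) * u g)
    (hα : ∀ g h : G, u g * u h = (α g h : A) * u (g * h))
    (htf : ∀ (g h : G) (r : R), α g h * r = 0 → r = 0)
    {h : G} (hh : IsUnit (α h h⁻¹)) (g : G) : IsUnit (α h g) := by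
  -- left inverse
  have hL : (↑hh.unit⁻¹ * σ h (α h⁻¹ (h * g))) * α h g = 1 := by
    rw [mul_assoc, CGR.key hA hσ hα h g]
    exact hh.val_inv_mul
  -- α h⁻¹ h is a unit
  have hinv : IsUnit (α h⁻¹ h) := by
    apply CGR.sig_unit_rev hA hσ hα htf h
    rw [CGR.key2 hA hσ hα]
    exact hh
  -- right inverse via h⁻¹
  have hkey := CGR.key hA hσ hα h⁻¹ (h * g)
  rw [inv_inv, inv_mul_cancel_left] at hkey
  -- so σ h⁻¹ (α h g) has a right inverse
  have hR0 : σ h⁻¹ (α h g) * (α h⁻¹ (h * g) * ↑hinv.unit⁻¹) = 1 := by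
    rw [← mul_assoc, hkey]
    exact hinv.mul_val_inv
  obtain ⟨d, hd⟩ := CGR.sig_surj hA hσ h⁻¹ (α h⁻¹ (h * g) * ↑hinv.unit⁻¹)
  have hR : α h g * d = 1 := by
    apply CGR.sig_inj hA hσ hα htf h⁻¹
    rw [CGR.sig_mul hA hσ, hd, CGR.sig_one hA hσ]
    exact hR0
  exact CGR.isUnit_of_left_right hL hR

lemma CGR.alpha_unit_right (hA : PreCrystalline A R u)
    (hσ : ∀ (g : G) (r : R), u g * (r : A) = (σ g r : A) * u g)
    (hα : ∀ g h : G, u g * u h = (α g h : A) * u (g * h))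
    (htf : ∀ (g h : G) (r : R), α g h * r = 0 → r = 0)
    {h' : G} (hh' : IsUnit (α h' h'⁻¹)) (g : G) : IsUnit (α g h') := by
  -- right inverse
  have h1 := CGR.cocycle hA hσ hα g h' h'⁻¹
  rw [mul_inv_cancel, CGR.alpha_one_right hA hα, mul_one] at h1
  -- h1 : α g h' * α (g * h') h'⁻¹ = σ g (α h' h'⁻¹)
  have hu1 : IsUnit (σ g (α h' h'⁻¹)) := CGR.sig_unit hA hσ g hh'
  have hR : α g h' * (α (g * h') h'⁻¹ * ↑hu1.unit⁻¹) = 1 := by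
    rw [← mul_assoc, h1]
    exact hu1.mul_val_inv
  -- left inverse
  have hinv : IsUnit (α h'⁻¹ h') := by
    apply CGR.sig_unit_rev hA hσ hα htf h'
    rw [CGR.key2 hA hσ hα]
    exact hh'
  have h2 := CGR.cocycle hA hσ hα (g * h') h'⁻¹ h'
  rw [mul_inv_cancel_right, inv_mul_cancel, CGR.alpha_one_right hA hα, mul_one] at h2
  -- h2 : α (g * h') h'⁻¹ * α g h' = σ (g * h') (α h'⁻¹ h')
  have hu2 : IsUnit (σ (g * h') (α h'⁻¹ h')) := CGR.sig_unit hA hσ (g * h') hinv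
  have hL : (↑hu2.unit⁻¹ * α (g * h') h'⁻¹) * α g h' = 1 := by
    rw [mul_assoc, h2]
    exact hu2.val_inv_mul
  exact CGR.isUnit_of_left_right hL hR

end Aux

/-- For a crystalline graded ring (a pre-crystalline graded ring that is torsion-free:
`α(g,h) r = 0` implies `r = 0`) with `H = {h ∈ G | α(h,h⁻¹) invertible in R}`:
for all `h, h' ∈ H` and `x, y ∈ G` the left ideals `R·α(hx, yh')` and `R·σ_h(α(x,y))`
coincide; in particular if `α(x,y)` is invertible in `R` then so is `α(hx, yh')`. -/
theorem crystalline_ideal_eq {A : Type*} [Ring A] {G : Type*} [Group G] [DecidableEq G]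
    (R : Subring A) (u : G → A) (hA : PreCrystalline A R u)
    (σ : G → R → R) (hσ : ∀ (g : G) (r : R), u g * (r : A) = (σ g r : A) * u g)
    (α : G → G → R) (hα : ∀ g h : G, u g * u h = (α g h : A) * u (g * h))
    (htf : ∀ (g h : G) (r : R), α g h * r = 0 → r = 0)
    (h h' x y : G) (hh : IsUnit (α h h⁻¹)) (hh' : IsUnit (α h' h'⁻¹)) :
    ({z : R | ∃ r : R, z = r * α (h * x) (y * h')} =
      {z : R | ∃ r : R, z = r * σ h (α x y)}) ∧
    (IsUnit (α x y) → IsUnit (α (h * x) (y * h'))) := by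
  set c := α (h * x) (y * h') with hc
  set d := σ h (α x y) with hd
  -- units
  have hP : IsUnit (α h x) := CGR.alpha_unit_left hA hσ hα htf hh x
  have hQ : IsUnit (σ (h * x) (α y h')) :=
    CGR.sig_unit hA hσ _ (CGR.alpha_unit_right hA hσ hα htf hh' y)
  have hD1 : IsUnit (α h (x * y)) := CGR.alpha_unit_left hA hσ hα htf hh (x * y)
  have hD2 : IsUnit (α (h * x * y) h') := CGR.alpha_unit_right hA hσ hα htf hh' (h * x * y)
  have hU : IsUnit (α h x * σ (h * x) (α y h')) := hP.mul hQ
  have hV : IsUnit (α h (x * y) * α (h * x * y) h') := hD1.mul hD2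
  -- key identity E : U * c = d * V
  have E : (α h x * σ (h * x) (α y h')) * c = d * (α h (x * y) * α (h * x * y) h') := by
    rw [hc, hd, mul_assoc, ← CGR.cocycle hA hσ hα (h * x) y h', ← mul_assoc,
      CGR.cocycle hA hσ hα h x y, mul_assoc]
  -- Claim B : ∃ s, c = s * d
  obtain ⟨w2, hw2⟩ := CGR.sig_surj hA hσ h (α h (x * y) * α (h * x * y) h')
  obtain ⟨w1, hw1⟩ := CGR.sig_surj hA hσ (x * y) w2
  have hdV : d * (α h (x * y) * α (h * x * y) h') = σ h (σ x (σ y w1)) * d := by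
    rw [← hw2, ← hw1, hd, ← CGR.sig_mul hA hσ, ← CGR.sig_comm hA hσ hα x y w1,
      CGR.sig_mul hA hσ]
  have hB : ∃ s : R, c = s * d := by
    refine ⟨↑hU.unit⁻¹ * σ h (σ x (σ y w1)), ?_⟩
    rw [mul_assoc, ← hdV, ← E, ← mul_assoc, hU.val_inv_mul, one_mul]
  -- Claim A : ∃ r, d = r * c
  obtain ⟨w3, hw3⟩ := CGR.sig_surj hA hσ ((h * x) * (y * h')) ↑hV.unit⁻¹
  have hcV : c * ↑hV.unit⁻¹ = σ (h * x) (σ (y * h') w3) * c := by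
    rw [← hw3, hc, CGR.sig_comm hA hσ hα (h * x) (y * h') w3]
  have hAa : ∃ r : R, d = r * c := by
    refine ⟨(α h x * σ (h * x) (α y h')) * σ (h * x) (σ (y * h') w3), ?_⟩
    have : d = ((α h x * σ (h * x) (α y h')) * c) * ↑hV.unit⁻¹ := by
      rw [E, mul_assoc, hV.mul_val_inv, mul_one]
    rw [this, mul_assoc, hcV, ← mul_assoc]
  constructor
  · ext z
    simp only [Set.mem_setOf_eq]
    constructor
    · rintro ⟨r, rfl⟩
      obtain ⟨s, hs⟩ := hB
      exact ⟨r * s, by rw [mul_assoc, ← hs]⟩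
    · rintro ⟨r, rfl⟩
      obtain ⟨s, hs⟩ := hAa
      exact ⟨r * s, by rw [mul_assoc, ← hs]⟩
  · intro hxy
    have hdu : IsUnit d := CGR.sig_unit hA hσ h hxy
    have : c = ↑hU.unit⁻¹ * (d * (α h (x * y) * α (h * x * y) h')) := by
      rw [← E, ← mul_assoc, hU.val_inv_mul, one_mul]
    rw [this]
    exact (hU.unit⁻¹.isUnit).mul (hdu.mul hV)
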